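/- arXiv:2205.15494 — 4 statements merged into one kernel-verified Lean document; each statement's English description precedes it below -/
import Mathlib

section
/- Let Q be a fair base rate distribution on X × [C] and h a classifier. Suppose that for every label y ∈ [C] and every sensitive group i ∈ [S] (with Pr_Q[Y = y, X_s = i] > 0), the per-group per-class error satisfies Pr_{(X,Y)∼Q}[h(X) ≠ Y | Y = y, X_s = i] ≤ ε. Then h achieves ε-Demographic Parity on Q: for all i, j ∈ [S], |Pr_{(X,Y)∼Q}[h(X) = 1 | X_s = i] − Pr_{(X,Y)∼Q}[h(X) = 1 | X_s = j]| ≤ ε. -/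
/-!
Let `b` be the common base rate of label `1` and `m ≤ 1` the total mass of the law of group `i`
(`0` or `1`, as conditioning on a null set gives the zero measure). In group `i`, predicting `1` on
a sample of true label `y ≠ 1` is an error, so `Pr_i[h = 1] ≤ b + ε (m - b)`; in group `j`, a
sample of label `1` is predicted `1` unless it is an error, so `Pr_j[h = 1] ≥ (1 - ε) b`.
Subtracting leaves `ε m ≤ ε`. The per-class error bounds pass to the group laws through
`Q[N ∩ {Y = y} | A] = Q[N | {Y = y} ∩ A] * Q[Y = y | A]`.
-/

open MeasureTheory ProbabilityTheory

theorem cond_inter_eq_cond_inter_mul_cond {Ω : Type*} [MeasurableSpace Ω] {μ : Measure Ω}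
    [IsFiniteMeasure μ] {E : Set Ω} (hE : MeasurableSet E) (A N : Set Ω) :
    μ[N ∩ E | A] = μ[N | E ∩ A] * μ[E | A] := by
  rcases eq_or_ne (μ (E ∩ A)) 0 with h0 | h0
  · have hEA : μ[E | A] = 0 := by rw [cond_apply' hE, Set.inter_comm, h0, mul_zero]
    rw [cond_eq_zero_of_meas_eq_zero h0, hEA, mul_zero]
    exact measure_mono_null Set.inter_subset_right hEA
  · have hrestrict : μ.restrict A (N ∩ E) = μ.restrict (E ∩ A) N := by
      rw [← Measure.restrict_restrict hE, Measure.restrict_apply' hE]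
    simp only [ProbabilityTheory.cond, Measure.smul_apply, smul_eq_mul, hrestrict,
      Measure.restrict_apply hE]
    rw [mul_comm (μ A)⁻¹ (μ (E ∩ A)), mul_mul_mul_comm,
      ENNReal.inv_mul_cancel h0 (measure_ne_top _ _), one_mul, mul_comm]

theorem measureReal_cond_inter_le {Ω : Type*} [MeasurableSpace Ω] {μ : Measure Ω}
    [IsFiniteMeasure μ] {E : Set Ω} (hE : MeasurableSet E) {A N : Set Ω} {ε : ℝ} (hε : 0 ≤ ε)
    (herr : 0 < μ (E ∩ A) → (μ[|E ∩ A]).real N ≤ ε) :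
    (μ[|A]).real (N ∩ E) ≤ ε * (μ[|A]).real E := by
  rw [measureReal_def, cond_inter_eq_cond_inter_mul_cond hE, ENNReal.toReal_mul]
  rcases eq_zero_or_pos (μ (E ∩ A)) with h0 | hpos
  · rw [cond_eq_zero_of_meas_eq_zero h0]
    simp only [Measure.coe_zero, Pi.zero_apply, ENNReal.toReal_zero, zero_mul]
    positivity
  · exact mul_le_mul_of_nonneg_right (herr hpos) ENNReal.toReal_nonneg

section
variable {Ω : Type*} [MeasurableSpace Ω] {C : ℕ} {μ ν : Measure Ω} {Y : Ω → Fin C}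

theorem measureReal_eq_sum_inter_fiber [IsFiniteMeasure μ] (hY : Measurable Y) (B : Set Ω) :
    μ.real B = ∑ y, μ.real (B ∩ {ω | Y ω = y}) := by
  have := sum_measureReal_preimage_singleton (μ := μ.restrict B) Finset.univ
    (fun y _ => hY (measurableSet_singleton y))
  simp only [Finset.coe_univ, Set.preimage_univ, measureReal_restrict_apply_univ] at this
  rw [← this]
  refine Finset.sum_congr rfl fun y _ => ?_
  rw [measureReal_restrict_apply (hY (measurableSet_singleton y)), Set.inter_comm]
  rfl

variable {ŷ : Ω → Fin C} {ε : ℝ}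

theorem measureReal_prediction_le [IsFiniteMeasure μ] (hY : Measurable Y) (y₀ : Fin C)
    (herr : ∀ y, μ.real ({ω | ŷ ω ≠ Y ω} ∩ {ω | Y ω = y}) ≤ ε * μ.real {ω | Y ω = y}) :
    μ.real {ω | ŷ ω = y₀} ≤ ε * μ.real Set.univ + (1 - ε) * μ.real {ω | Y ω = y₀} := by
  have hclass : ∀ y, μ.real ({ω | ŷ ω = y₀} ∩ {ω | Y ω = y}) ≤
      ε * μ.real {ω | Y ω = y} + if y = y₀ then (1 - ε) * μ.real {ω | Y ω = y} else 0 := by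
    intro y
    split_ifs with hy
    · have := measureReal_mono (μ := μ) (Set.inter_subset_right (s := {ω | ŷ ω = y₀})
        (t := {ω | Y ω = y}))
      linarith
    · have hsub : {ω | ŷ ω = y₀} ∩ {ω | Y ω = y} ⊆ {ω | ŷ ω ≠ Y ω} ∩ {ω | Y ω = y} :=
        fun ω ⟨hŷ, hY⟩ => ⟨fun h => hy (hY ▸ h ▸ hŷ), hY⟩
      simpa using (measureReal_mono hsub).trans (herr y)
  calc μ.real {ω | ŷ ω = y₀}
      = ∑ y, μ.real ({ω | ŷ ω = y₀} ∩ {ω | Y ω = y}) := measureReal_eq_sum_inter_fiber hY _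
    _ ≤ ∑ y, (ε * μ.real {ω | Y ω = y} +
          if y = y₀ then (1 - ε) * μ.real {ω | Y ω = y} else 0) :=
        Finset.sum_le_sum fun y _ => hclass y
    _ = ε * μ.real Set.univ + (1 - ε) * μ.real {ω | Y ω = y₀} := by
      rw [Finset.sum_add_distrib, ← Finset.mul_sum, Finset.sum_ite_eq' Finset.univ y₀,
        measureReal_eq_sum_inter_fiber hY Set.univ]
      simp only [Set.univ_inter, Finset.mem_univ, if_true]

theorem le_measureReal_prediction [IsFiniteMeasure μ] (y₀ : Fin C)
    (herr : μ.real ({ω | ŷ ω ≠ Y ω} ∩ {ω | Y ω = y₀}) ≤ ε * μ.real {ω | Y ω = y₀}) :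
    (1 - ε) * μ.real {ω | Y ω = y₀} ≤ μ.real {ω | ŷ ω = y₀} := by
  have hcover : {ω | Y ω = y₀} ⊆ {ω | ŷ ω = y₀} ∪ ({ω | ŷ ω ≠ Y ω} ∩ {ω | Y ω = y₀}) := by
    intro ω hω
    by_cases hŷ : ŷ ω = y₀
    · exact Or.inl hŷ
    · exact Or.inr ⟨fun h => hŷ (h.trans hω), hω⟩
  have := (measureReal_mono (μ := μ) hcover).trans (measureReal_union_le _ _)
  linarith

theorem measureReal_prediction_sub_le [IsFiniteMeasure μ] [IsFiniteMeasure ν] (hY : Measurable Y)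
    (y₀ : Fin C) (hε : 0 ≤ ε) (hμ : μ.real Set.univ ≤ 1)
    (hbase : μ.real {ω | Y ω = y₀} = ν.real {ω | Y ω = y₀})
    (herrμ : ∀ y, μ.real ({ω | ŷ ω ≠ Y ω} ∩ {ω | Y ω = y}) ≤ ε * μ.real {ω | Y ω = y})
    (herrν : ν.real ({ω | ŷ ω ≠ Y ω} ∩ {ω | Y ω = y₀}) ≤ ε * ν.real {ω | Y ω = y₀}) :
    μ.real {ω | ŷ ω = y₀} - ν.real {ω | ŷ ω = y₀} ≤ ε := by
  have hupper := measureReal_prediction_le hY y₀ herrμ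
  have hlower := le_measureReal_prediction y₀ herrν
  have hmass : ε * μ.real Set.univ ≤ ε := mul_le_of_le_one_right hε hμ
  rw [← hbase] at hlower
  linarith

end

/-- Labels `[C]` are encoded as `Fin C`, so label `1` is `⟨0, hC⟩`. -/
theorem statement_1 {X : Type*} [MeasurableSpace X] {S C : ℕ} (hC : 0 < C)
    (xs : X → Fin S) (h : X → Fin C)
    (Q : Measure (X × Fin C)) [IsProbabilityMeasure Q]
    (hfair : ∀ (y : Fin C) (i j : Fin S),
      (Q[|{p | xs p.1 = i}]) {p | p.2 = y} = (Q[|{p | xs p.1 = j}]) {p | p.2 = y})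
    (ε : ℝ) (hε : 0 ≤ ε)
    (herr : ∀ (y : Fin C) (i : Fin S),
      0 < Q {p | p.2 = y ∧ xs p.1 = i} →
      ((Q[|{p | p.2 = y ∧ xs p.1 = i}]) {p | h p.1 ≠ p.2}).toReal ≤ ε) :
    ∀ (i j : Fin S),
      |((Q[|{p | xs p.1 = i}]) {p | h p.1 = ⟨0, hC⟩}).toReal -
        ((Q[|{p | xs p.1 = j}]) {p | h p.1 = ⟨0, hC⟩}).toReal| ≤ ε := by
  have herr_group : ∀ i y, (Q[|{p | xs p.1 = i}]).real ({p | h p.1 ≠ p.2} ∩ {p | p.2 = y}) ≤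
      ε * (Q[|{p | xs p.1 = i}]).real {p | p.2 = y} := fun i y =>
    measureReal_cond_inter_le (measurable_snd (measurableSet_singleton y)) hε (herr y i)
  have hsub : ∀ i j : Fin S,
      (Q[|{p | xs p.1 = i}]).real {p | h p.1 = ⟨0, hC⟩} -
        (Q[|{p | xs p.1 = j}]).real {p | h p.1 = ⟨0, hC⟩} ≤ ε := fun i j =>
    measureReal_prediction_sub_le (Y := Prod.snd) (ŷ := fun p => h p.1) measurable_snd ⟨0, hC⟩
      hε measureReal_le_one (congrArg ENNReal.toReal (hfair _ i j)) (herr_group i) (herr_group j _)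
  exact fun i j => abs_sub_le_iff.2 ⟨hsub i j, hsub j i⟩
end

section
/- (Tight fairness certificate under sensitive shifting.) Let P be a distribution on X × [C] with p_{s,y} := Pr_P[X_s = s, Y = y] > 0 for all s ∈ [S], y ∈ [C], let h be a classifier, ℓ a nonnegative loss, and E_{s,y} := E_{(X,Y)∼P_{s,y}}[ℓ(h(X),Y)]. Then for any ρ > 0, the supremum of E_{(X,Y)∼Q}[ℓ(h(X),Y)] over all fair base rate distributions Q with H(P,Q) ≤ ρ whose subpopulation conditionals satisfy Q_{s,y} = P_{s,y} for all s, y, equals the maximum of Σ_{s=1}^S Σ_{y=1}^C k_s r_y E_{s,y} over all k ∈ ℝ^S, r ∈ ℝ^C with k_s ≥ 0, r_y ≥ 0, Σ_s k_s = 1, Σ_y r_y = 1, and 1 − ρ² − Σ_{s,y} √(p_{s,y} k_s r_y) ≤ 0, whenever either feasible set is nonempty. -/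
/-!
A distribution `Q` with the same subpopulation conditionals as `P` is `Σ q_{s,y} P_{s,y}`, so
it is determined by its subpopulation masses `q`; its base rates are fair exactly when
`q_{s,y} = k_s r_y` for probability vectors `k`, `r`, and `k, r > 0` because every `Q_{s,y}`
must be a probability measure. The densities of `P` and `Q` with respect to `P + Q` are
constant on subpopulations, so `1 - H(P,Q)² = Σ √(p_{s,y} k_s r_y)`, and the expected loss is
`Σ k_s r_y E_{s,y}`. Hence the first supremum is taken over the strictly positive points of the
feasible set `F` of the second problem. `F` is compact, and convex because
`(k, r) ↦ Σ √(p_{s,y} k_s r_y)` is concave; optimising `k` and then `r` by Cauchy–Schwarz gives a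
strictly positive point of `F`. So the positive points are dense in `F`, the objective is
continuous, and both suprema equal the maximum over `F`.
-/

open MeasureTheory ProbabilityTheory

/-- The Hellinger distance `H(P,Q) = sqrt((1/2) ∫ (√p − √q)² dμ)`, computed with the
reference measure `μ := P + Q` (both `P` and `Q` are absolutely continuous with respect to
`P + Q`, and the Hellinger distance does not depend on the choice of reference measure). -/
noncomputable def hellinger {Z : Type*} [MeasurableSpace Z] (P Q : Measure Z) : ℝ :=
  Real.sqrt ((1 / 2) * ∫ z,
    (Real.sqrt ((P.rnDeriv (P + Q) z).toReal) - Real.sqrt ((Q.rnDeriv (P + Q) z).toReal)) ^ 2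
      ∂(P + Q))

/-- The subpopulation `{(x, y') : x_s = s, y' = y}` of the sample space `X × Fin C`,
determined by the sensitive attribute map `xs` and the label `y`. -/
def subpop {X : Type*} {S C : ℕ} (xs : X → Fin S) (s : Fin S) (y : Fin C) :
    Set (X × Fin C) := {p | xs p.1 = s ∧ p.2 = y}

/-- `Q` is a fair base rate distribution: for every label `y ∈ [C]`, the base rate
`b^Q_{s,y} = Pr_Q[Y = y | X_s = s]` is equal across all sensitive groups `s ∈ [S]`. -/
def IsFairBaseRate {X : Type*} [MeasurableSpace X] {S C : ℕ} (xs : X → Fin S)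
    (Q : Measure (X × Fin C)) : Prop :=
  ∀ (y : Fin C) (i j : Fin S),
    (Q[|{p | xs p.1 = i}]) {p | p.2 = y} = (Q[|{p | xs p.1 = j}]) {p | p.2 = y}

open scoped ENNReal

theorem csSup_image_eq_of_subset_closure {E α : Type*} [TopologicalSpace E]
    [ConditionallyCompleteLinearOrder α] [TopologicalSpace α] [OrderTopology α]
    {f : E → α} (hf : Continuous f) {D K : Set E} (hK : IsCompact K) (hD : D.Nonempty)
    (hDK : D ⊆ K) (hKD : K ⊆ closure D) :
    sSup (f '' D) = sSup (f '' K) ∧ sSup (f '' K) ∈ f '' K := by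
  have hfK : IsCompact (f '' K) := hK.image hf
  have hmem : sSup (f '' K) ∈ f '' K := hfK.sSup_mem ((hD.mono hDK).image f)
  have hub : sSup (f '' K) ∈ upperBounds (f '' D) := fun _ ha =>
    le_csSup hfK.bddAbove (Set.image_mono hDK ha)
  have hcl : sSup (f '' K) ∈ closure (f '' D) :=
    image_closure_subset_closure_image hf (Set.image_mono hKD hmem)
  exact ⟨(isLUB_of_mem_closure hub hcl).csSup_eq (hD.image f), hmem⟩

theorem Real.sqrt_mul_add_sqrt_mul_le {a b c d : ℝ} (ha : 0 ≤ a) (hb : 0 ≤ b) (hc : 0 ≤ c)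
    (hd : 0 ≤ d) : √(a * c) + √(b * d) ≤ √((a + b) * (c + d)) := by
  have := Real.sum_sqrt_mul_sqrt_le Finset.univ (f := ![a, b]) (g := ![c, d])
    (by simp [Fin.forall_fin_two, ha, hb]) (by simp [Fin.forall_fin_two, hc, hd])
  simp only [Fin.sum_univ_two, Matrix.cons_val_zero, Matrix.cons_val_one] at this
  rwa [← Real.sqrt_mul ha, ← Real.sqrt_mul hb, ← Real.sqrt_mul (add_nonneg ha hb)] at this

section Bhattacharyya

variable {ι κ : Type*} [Fintype ι] [Fintype κ]

noncomputable def bhattacharyya (p : ι → κ → ℝ) (k : ι → ℝ) (r : κ → ℝ) : ℝ :=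
  ∑ s, ∑ y, √(p s y * k s * r y)

variable (p : ι → κ → ℝ)

theorem bhattacharyya_swap (k : ι → ℝ) (r : κ → ℝ) :
    bhattacharyya (fun y s => p s y) r k = bhattacharyya p k r := by
  unfold bhattacharyya
  rw [Finset.sum_comm]
  simp only [mul_right_comm]

theorem bhattacharyya_eq_sum_sqrt_mul {k : ι → ℝ} (hk : ∀ s, 0 ≤ k s) (r : κ → ℝ) :
    bhattacharyya p k r = ∑ s, √(k s) * ∑ y, √(p s y * r y) := by
  unfold bhattacharyya
  refine Finset.sum_congr rfl fun s _ => ?_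
  rw [Finset.mul_sum]
  refine Finset.sum_congr rfl fun y _ => ?_
  rw [← Real.sqrt_mul (hk s), mul_left_comm, mul_assoc]

theorem continuous_bhattacharyya :
    Continuous fun x : (ι → ℝ) × (κ → ℝ) => bhattacharyya p x.1 x.2 := by
  unfold bhattacharyya
  fun_prop

theorem concaveOn_bhattacharyya (hp : ∀ s y, 0 ≤ p s y) :
    ConcaveOn ℝ (Set.Ici 0) fun x : (ι → ℝ) × (κ → ℝ) => bhattacharyya p x.1 x.2 := by
  refine ⟨convex_Ici 0, fun x hx x' hx' a b ha hb hab => ?_⟩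
  simp only [bhattacharyya, smul_eq_mul, Finset.mul_sum, ← Finset.sum_add_distrib]
  refine Finset.sum_le_sum fun s _ => Finset.sum_le_sum fun y _ => ?_
  have hk : 0 ≤ x.1 s := hx.1 s
  have hr : 0 ≤ x.2 y := hx.2 y
  have hk' : 0 ≤ x'.1 s := hx'.1 s
  have hr' : 0 ≤ x'.2 y := hx'.2 y
  have hscale : ∀ {t u v : ℝ}, 0 ≤ t → t * √(p s y * u * v) = √(p s y) * √(t * u * (t * v)) :=
    fun {t u v} ht => by
      rw [show t * u * (t * v) = t ^ 2 * (u * v) by ring, Real.sqrt_mul (sq_nonneg t),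
        Real.sqrt_sq ht, mul_assoc, Real.sqrt_mul (hp s y)]
      ring
  rw [hscale ha, hscale hb, ← mul_add, Prod.fst_add, Prod.snd_add, Prod.smul_fst,
    Prod.smul_snd, Prod.smul_fst, Prod.smul_snd]
  simp only [Pi.add_apply, Pi.smul_apply, smul_eq_mul]
  rw [mul_assoc (p s y), Real.sqrt_mul (hp s y)]
  gcongr
  exact Real.sqrt_mul_add_sqrt_mul_le (by positivity) (by positivity) (by positivity)
    (by positivity)

theorem exists_pos_mem_stdSimplex_sum_sqrt_mul_ge {c : ι → ℝ} (hc : ∀ i, 0 < c i)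
    {k : ι → ℝ} (hk : k ∈ stdSimplex ℝ ι) :
    ∃ k' ∈ stdSimplex ℝ ι, (∀ i, 0 < k' i) ∧ ∑ i, √(k i) * c i ≤ ∑ i, √(k' i) * c i := by
  have : Nonempty ι := by
    by_contra h
    simpa [not_nonempty_iff.mp h] using hk.2
  set T := ∑ i, c i ^ 2
  have hT : 0 < T := Finset.sum_pos (fun i _ => pow_pos (hc i) 2) Finset.univ_nonempty
  -- the equality case of Cauchy–Schwarz: `√k'` proportional to `c`
  refine ⟨fun i => c i ^ 2 / T, ⟨fun i => by positivity, by simp [← Finset.sum_div, T, hT.ne']⟩,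
    fun i => div_pos (pow_pos (hc i) 2) hT, ?_⟩
  calc ∑ i, √(k i) * c i = ∑ i, √(k i) * √(c i ^ 2) := by
        simp only [Real.sqrt_sq (hc _).le]
    _ ≤ √(∑ i, k i) * √T := Real.sum_sqrt_mul_sqrt_le _ hk.1 fun i => sq_nonneg _
    _ = ∑ i, √(c i ^ 2 / T) * c i := by
        simp only [hk.2, Real.sqrt_one, one_mul, Real.sqrt_div' _ hT.le,
          Real.sqrt_sq (hc _).le, div_mul_eq_mul_div, ← Finset.sum_div, ← sq]
        rw [eq_div_iff (Real.sqrt_pos.2 hT).ne', Real.mul_self_sqrt hT.le]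

variable {p}

theorem exists_pos_mem_stdSimplex_bhattacharyya_ge (hp : ∀ s y, 0 < p s y)
    {k : ι → ℝ} (hk : k ∈ stdSimplex ℝ ι) {r : κ → ℝ} (hr : r ∈ stdSimplex ℝ κ) :
    ∃ k' ∈ stdSimplex ℝ ι, (∀ s, 0 < k' s) ∧ bhattacharyya p k r ≤ bhattacharyya p k' r := by
  obtain ⟨y₀, -, hy₀⟩ := Finset.exists_ne_zero_of_sum_ne_zero (hr.2.trans_ne one_ne_zero)
  have hc : ∀ s, 0 < ∑ y, √(p s y * r y) := fun s =>
    Finset.sum_pos' (fun y _ => Real.sqrt_nonneg _)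
      ⟨y₀, Finset.mem_univ _, Real.sqrt_pos.2 (mul_pos (hp s y₀) ((hr.1 y₀).lt_of_ne' hy₀))⟩
  obtain ⟨k', hk', hk'pos, hle⟩ := exists_pos_mem_stdSimplex_sum_sqrt_mul_ge hc hk
  refine ⟨k', hk', hk'pos, ?_⟩
  rwa [bhattacharyya_eq_sum_sqrt_mul p hk.1, bhattacharyya_eq_sum_sqrt_mul p hk'.1]

theorem exists_pos_bhattacharyya_ge (hp : ∀ s y, 0 < p s y)
    {x : (ι → ℝ) × (κ → ℝ)} (hx : x ∈ stdSimplex ℝ ι ×ˢ stdSimplex ℝ κ) :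
    ∃ x' ∈ stdSimplex ℝ ι ×ˢ stdSimplex ℝ κ, ((∀ s, 0 < x'.1 s) ∧ ∀ y, 0 < x'.2 y) ∧
      bhattacharyya p x.1 x.2 ≤ bhattacharyya p x'.1 x'.2 := by
  obtain ⟨k', hk', hk'pos, hle⟩ := exists_pos_mem_stdSimplex_bhattacharyya_ge hp hx.1 hx.2
  obtain ⟨r', hr', hr'pos, hle'⟩ :=
    exists_pos_mem_stdSimplex_bhattacharyya_ge (p := fun y s => p s y) (fun y s => hp s y) hx.2 hk'
  rw [bhattacharyya_swap p, bhattacharyya_swap p] at hle'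
  exact ⟨(k', r'), ⟨hk', hr'⟩, ⟨hk'pos, hr'pos⟩, hle.trans hle'⟩

variable (p) in
def certFeasible (ρ : ℝ) : Set ((ι → ℝ) × (κ → ℝ)) :=
  {x | x ∈ stdSimplex ℝ ι ×ˢ stdSimplex ℝ κ ∧ 1 - ρ ^ 2 ≤ bhattacharyya p x.1 x.2}

theorem isCompact_certFeasible (ρ : ℝ) : IsCompact (certFeasible p ρ) :=
  ((isCompact_stdSimplex ℝ ι).prod (isCompact_stdSimplex ℝ κ)).inter_right
    (isClosed_le continuous_const (continuous_bhattacharyya p))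

theorem convex_certFeasible (hp : ∀ s y, 0 ≤ p s y) (ρ : ℝ) : Convex ℝ (certFeasible p ρ) :=
  ((concaveOn_bhattacharyya p hp).subset
    (fun _ hx => ⟨fun s => hx.1.1 s, fun y => hx.2.1 y⟩)
    ((convex_stdSimplex ℝ ι).prod (convex_stdSimplex ℝ κ))).convex_ge _

theorem certFeasible_subset_closure_pos (hp : ∀ s y, 0 < p s y) (ρ : ℝ) :
    certFeasible p ρ ⊆ closure (certFeasible p ρ ∩ {x | (∀ s, 0 < x.1 s) ∧ ∀ y, 0 < x.2 y}) := by
  intro x hx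
  obtain ⟨x', hx', hpos, hle⟩ := exists_pos_bhattacharyya_ge hp hx.1
  have hx'F : x' ∈ certFeasible p ρ := ⟨hx', hx.2.trans hle⟩
  refine closure_mono ?_ (segment_subset_closure_openSegment (left_mem_segment ℝ x x'))
  rintro _ ⟨a, b, ha, hb, hab, rfl⟩
  refine ⟨convex_certFeasible (fun s y => (hp s y).le) ρ hx hx'F ha.le hb.le hab,
    fun s => ?_, fun y => ?_⟩
  · exact add_pos_of_nonneg_of_pos (mul_nonneg ha.le (hx.1.1.1 s)) (mul_pos hb (hpos.1 s))
  · exact add_pos_of_nonneg_of_pos (mul_nonneg ha.le (hx.1.2.1 y)) (mul_pos hb (hpos.2 y))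

variable (p) in
theorem setOf_certFeasible_eq_image (ρ : ℝ) (e : ι → κ → ℝ) :
    {L | ∃ (k : ι → ℝ) (r : κ → ℝ), (∀ s, 0 ≤ k s) ∧ (∀ y, 0 ≤ r y) ∧ (∑ s, k s = 1) ∧
      (∑ y, r y = 1) ∧ 1 - ρ ^ 2 - ∑ s, ∑ y, √(p s y * k s * r y) ≤ 0 ∧
      L = ∑ s, ∑ y, k s * r y * e s y} =
    (fun x => ∑ s, ∑ y, x.1 s * x.2 y * e s y) '' certFeasible p ρ := by
  ext L
  constructor
  · rintro ⟨k, r, hk, hr, hk₁, hr₁, hg, rfl⟩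
    exact ⟨(k, r), ⟨⟨⟨hk, hk₁⟩, ⟨hr, hr₁⟩⟩, sub_nonpos.1 hg⟩, rfl⟩
  · rintro ⟨⟨k, r⟩, ⟨⟨⟨hk, hk₁⟩, ⟨hr, hr₁⟩⟩, hg⟩, rfl⟩
    exact ⟨k, r, hk, hr, hk₁, hr₁, sub_nonpos.2 hg, rfl⟩

end Bhattacharyya

theorem sum_measure_fiber {Z β : Type*} [MeasurableSpace Z] [Fintype β] [MeasurableSpace β]
    [MeasurableSingletonClass β] {f : Z → β} (hf : Measurable f) (μ : Measure Z) :
    ∑ b, μ (f ⁻¹' {b}) = μ Set.univ := by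
  simp [sum_measure_preimage_singleton _ fun b _ => hf (measurableSet_singleton b)]

section FiberMixture

variable {Z ι : Type*} [MeasurableSpace Z] [Fintype ι] {π : Z → ι} {P : Measure Z}

noncomputable def fiberMixture (π : Z → ι) (P : Measure Z) (w : ι → ℝ≥0∞) : Measure Z :=
  ∑ i, w i • P[|π ← i]

theorem fiberMixture_apply (π : Z → ι) (P : Measure Z) (w : ι → ℝ≥0∞) (T : Set Z) :
    fiberMixture π P w T = ∑ i, w i * P[|π ← i] T := by
  simp [fiberMixture, Measure.coe_finsetSum]

theorem isFiniteMeasure_fiberMixture {w : ι → ℝ≥0∞} (hw : ∀ i, w i ≠ ∞) :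
    IsFiniteMeasure (fiberMixture π P w) := by
  constructor
  rw [fiberMixture_apply]
  exact ENNReal.sum_lt_top.2 fun i _ => ENNReal.mul_lt_top (hw i).lt_top (measure_lt_top _ _)

theorem isProbabilityMeasure_fiberMixture [IsFiniteMeasure P] (hP : ∀ i, P (π ⁻¹' {i}) ≠ 0)
    {w : ι → ℝ≥0∞} (hw : ∑ i, w i = 1) : IsProbabilityMeasure (fiberMixture π P w) := by
  constructor
  simp_rw [fiberMixture_apply, fun i => (cond_isProbabilityMeasure (hP i)).measure_univ, mul_one,
    hw]

theorem fiberMixture_add (v w : ι → ℝ≥0∞) :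
    fiberMixture π P (v + w) = fiberMixture π P v + fiberMixture π P w := by
  simp [fiberMixture, add_smul, Finset.sum_add_distrib]

theorem integral_fiberMixture {E : Type*} [NormedAddCommGroup E] [NormedSpace ℝ E]
    {w : ι → ℝ≥0∞} (hw : ∀ i, w i ≠ ∞) {f : Z → E} (hf : ∀ i, Integrable f (P[|π ← i])) :
    ∫ z, f z ∂fiberMixture π P w = ∑ i, (w i).toReal • ∫ z, f z ∂P[|π ← i] := by
  rw [fiberMixture, integral_finsetSum_measure fun i _ => (hf i).smul_measure (hw i)]
  simp_rw [integral_smul_measure]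

variable [MeasurableSpace ι] [DiscreteMeasurableSpace ι]

theorem cond_fiber_apply_fiber_of_ne (hπ : Measurable π) {i j : ι} (h : j ≠ i) :
    P[|π ← j] (π ⁻¹' {i}) = 0 :=
  measure_eq_zero_iff_ae_notMem.2 <|
    (ae_cond_mem (hπ (measurableSet_singleton j))).mono fun _ hj hi => h (hj.symm.trans hi)

theorem fiberMixture_apply_fiber_inter (hπ : Measurable π) (w : ι → ℝ≥0∞) (i : ι) (T : Set Z) :
    fiberMixture π P w (π ⁻¹' {i} ∩ T) = w i * P[|π ← i] T := by
  rw [fiberMixture_apply, Finset.sum_eq_single i, cond_inter_self (hπ (measurableSet_singleton i))]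
  · intro j _ hj
    rw [measure_mono_null Set.inter_subset_left (cond_fiber_apply_fiber_of_ne hπ hj), mul_zero]
  · simp

theorem fiberMixture_apply_fiber [IsFiniteMeasure P] (hπ : Measurable π) (w : ι → ℝ≥0∞) {i : ι}
    (hP : P (π ⁻¹' {i}) ≠ 0) : fiberMixture π P w (π ⁻¹' {i}) = w i := by
  have := cond_isProbabilityMeasure hP
  simpa using fiberMixture_apply_fiber_inter (P := P) hπ w i Set.univ

theorem cond_fiberMixture [IsFiniteMeasure P] (hπ : Measurable π) {w : ι → ℝ≥0∞} {i : ι}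
    (hP : P (π ⁻¹' {i}) ≠ 0) (hw₀ : w i ≠ 0) (hw : w i ≠ ∞) :
    (fiberMixture π P w)[|π ← i] = P[|π ← i] := by
  ext T hT
  rw [cond_apply (hπ (measurableSet_singleton i)), fiberMixture_apply_fiber_inter hπ,
    fiberMixture_apply_fiber hπ w hP, ← mul_assoc, ENNReal.inv_mul_cancel hw₀ hw, one_mul]

theorem fiberMixture_self [IsFiniteMeasure P] (hπ : Measurable π) :
    fiberMixture π P (fun i => P (π ⁻¹' {i})) = P :=
  sum_meas_smul_cond_fiber hπ P

theorem eq_fiberMixture_of_cond_eq (hπ : Measurable π) {Q : Measure Z} [IsFiniteMeasure Q]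
    (h : ∀ i, Q[|π ← i] = P[|π ← i]) : Q = fiberMixture π P (fun i => Q (π ⁻¹' {i})) := by
  conv_lhs => rw [← sum_meas_smul_cond_fiber hπ Q]
  simp_rw [fiberMixture, h]

theorem withDensity_fiberMixture (hπ : Measurable π) (c w : ι → ℝ≥0∞) :
    (fiberMixture π P w).withDensity (fun z => c (π z)) = fiberMixture π P (c * w) := by
  rw [fiberMixture, ← Measure.sum_fintype (fun i => w i • P[|π ← i]), withDensity_sum,
    Measure.sum_fintype, fiberMixture]
  refine Finset.sum_congr rfl fun i _ => ?_
  have hc : (fun z => c (π z)) =ᵐ[P[|π ← i]] fun _ => c i :=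
    (ae_cond_mem (hπ (measurableSet_singleton i))).mono fun _ hz => congrArg c hz
  rw [withDensity_smul_measure, withDensity_congr_ae hc, withDensity_const, smul_smul,
    Pi.mul_apply, mul_comm]

theorem rnDeriv_fiberMixture (hπ : Measurable π) (v : ι → ℝ≥0∞) {w : ι → ℝ≥0∞}
    (hw₀ : ∀ i, w i ≠ 0) (hw : ∀ i, w i ≠ ∞) :
    (fiberMixture π P v).rnDeriv (fiberMixture π P w)
      =ᵐ[fiberMixture π P w] fun z => v (π z) / w (π z) := by
  have := isFiniteMeasure_fiberMixture (π := π) (P := P) hw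
  have hvw : fiberMixture π P v = (fiberMixture π P w).withDensity fun z => (v / w) (π z) := by
    rw [withDensity_fiberMixture hπ]
    congr
    ext i
    exact (ENNReal.div_mul_cancel (hw₀ i) (hw i)).symm
  rw [hvw]
  exact Measure.rnDeriv_withDensity _ ((measurable_of_finite _).comp hπ)

theorem integral_comp_fiberMixture [IsFiniteMeasure P] (hπ : Measurable π)
    (hP : ∀ i, P (π ⁻¹' {i}) ≠ 0) {w : ι → ℝ≥0∞} (hw : ∀ i, w i ≠ ∞) (g : ι → ℝ) :
    ∫ z, g (π z) ∂fiberMixture π P w = ∑ i, (w i).toReal * g i := by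
  have hg : ∀ i, (fun z => g (π z)) =ᵐ[P[|π ← i]] fun _ => g i := fun i =>
    (ae_cond_mem (hπ (measurableSet_singleton i))).mono fun _ hz => congrArg g hz
  rw [integral_fiberMixture hw fun i => (integrable_const (g i)).congr (hg i).symm]
  refine Finset.sum_congr rfl fun i _ => ?_
  have := cond_isProbabilityMeasure (hP i)
  rw [integral_congr_ae (hg i), integral_const, probReal_univ, one_smul, smul_eq_mul]

end FiberMixture

theorem Real.add_mul_sqrt_div_sub_sqrt_div_sq {a b : ℝ} (ha : 0 ≤ a) (hb : 0 ≤ b)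
    (hab : 0 < a + b) :
    (a + b) * (√(a / (a + b)) - √(b / (a + b))) ^ 2 = (√a - √b) ^ 2 := by
  rw [Real.sqrt_div ha, Real.sqrt_div hb, ← sub_div, div_pow, Real.sq_sqrt hab.le,
    mul_div_cancel₀ _ hab.ne']

section Hellinger

variable {Z ι : Type*} [MeasurableSpace Z] [Fintype ι] [MeasurableSpace ι]
  [DiscreteMeasurableSpace ι] {π : Z → ι} {P : Measure Z}

theorem hellinger_fiberMixture_fiberMixture [IsFiniteMeasure P] (hπ : Measurable π)
    (hP : ∀ i, P (π ⁻¹' {i}) ≠ 0) {v w : ι → ℝ≥0∞} (hv₀ : ∀ i, v i ≠ 0) (hv : ∀ i, v i ≠ ∞)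
    (hw : ∀ i, w i ≠ ∞) :
    hellinger (fiberMixture π P v) (fiberMixture π P w) =
      √(1 / 2 * ∑ i, (√(v i).toReal - √(w i).toReal) ^ 2) := by
  have hsum : fiberMixture π P v + fiberMixture π P w = fiberMixture π P (v + w) :=
    (fiberMixture_add v w).symm
  have hvw₀ : ∀ i, (v + w) i ≠ 0 := fun i => by simp [hv₀ i]
  have hvw : ∀ i, (v + w) i ≠ ∞ := fun i => ENNReal.add_ne_top.2 ⟨hv i, hw i⟩
  -- both densities with respect to the sum are constant on the fibers of `π`
  have hvd := rnDeriv_fiberMixture (P := P) hπ v hvw₀ hvw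
  have hwd := rnDeriv_fiberMixture (P := P) hπ w hvw₀ hvw
  rw [← hsum] at hvd hwd
  set G : ι → ℝ := fun i => (√((v i / (v + w) i).toReal) - √((w i / (v + w) i).toReal)) ^ 2
  rw [hellinger, integral_congr_ae (g := fun z => G (π z)), hsum,
    integral_comp_fiberMixture hπ hP hvw]
  · refine congrArg (fun t => √(1 / 2 * t)) (Finset.sum_congr rfl fun i _ => ?_)
    have hvi : 0 < (v i).toReal := ENNReal.toReal_pos (hv₀ i) (hv i)
    simp only [G, Pi.add_apply, ENNReal.toReal_div, ENNReal.toReal_add (hv i) (hw i)]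
    exact Real.add_mul_sqrt_div_sub_sqrt_div_sq hvi.le ENNReal.toReal_nonneg
      (add_pos_of_pos_of_nonneg hvi ENNReal.toReal_nonneg)
  · filter_upwards [hvd, hwd] with z h1 h2
    rw [h1, h2]

theorem hellinger_fiberMixture [IsProbabilityMeasure P] (hπ : Measurable π)
    (hP : ∀ i, P (π ⁻¹' {i}) ≠ 0) {w : ι → ℝ≥0∞} (hw : ∀ i, w i ≠ ∞) (hw₁ : ∑ i, w i = 1) :
    hellinger P (fiberMixture π P w) = √(1 - ∑ i, √((P (π ⁻¹' {i})).toReal * (w i).toReal)) := by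
  have h := hellinger_fiberMixture_fiberMixture hπ hP hP (fun i => measure_ne_top P _) hw
  rw [fiberMixture_self hπ] at h
  have hP₁ : ∑ i, (P (π ⁻¹' {i})).toReal = 1 := by
    rw [← ENNReal.toReal_sum fun i _ => measure_ne_top P _, sum_measure_fiber hπ, measure_univ,
      ENNReal.toReal_one]
  have hw₁' : ∑ i, (w i).toReal = 1 := by
    rw [← ENNReal.toReal_sum fun i _ => hw i, hw₁, ENNReal.toReal_one]
  rw [h]
  congr 1
  simp_rw [sub_sq, Real.sq_sqrt ENNReal.toReal_nonneg, mul_assoc,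
    ← Real.sqrt_mul ENNReal.toReal_nonneg]
  rw [Finset.sum_add_distrib, Finset.sum_sub_distrib, hP₁, hw₁', ← Finset.mul_sum]
  ring

end Hellinger

def subpopIndex {X : Type*} {S C : ℕ} (xs : X → Fin S) (z : X × Fin C) : Fin S × Fin C :=
  (xs z.1, z.2)

theorem subpop_eq_preimage {X : Type*} {S C : ℕ} (xs : X → Fin S) (s : Fin S) (y : Fin C) :
    subpop xs s y = subpopIndex xs ⁻¹' {(s, y)} := by
  ext
  simp [subpop, subpopIndex]

theorem measurable_subpopIndex {X : Type*} [MeasurableSpace X] {S C : ℕ} {xs : X → Fin S}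
    (hxs : Measurable xs) : Measurable (subpopIndex (C := C) xs) :=
  (hxs.comp measurable_fst).prodMk measurable_snd

section FairBaseRate

variable {X : Type*} [MeasurableSpace X] {S C : ℕ} {xs : X → Fin S}

theorem measurableSet_group (hxs : Measurable xs) (s : Fin S) :
    MeasurableSet {z : X × Fin C | xs z.1 = s} :=
  (hxs.comp measurable_fst) (measurableSet_singleton s)

theorem measure_group_eq_sum_subpop (Q : Measure (X × Fin C))
    (s : Fin S) : Q {z | xs z.1 = s} = ∑ y, Q (subpop xs s y) := by
  rw [← Measure.restrict_apply_univ, ← sum_measure_fiber measurable_snd]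
  refine Finset.sum_congr rfl fun y _ => ?_
  rw [Measure.restrict_apply (measurable_snd (measurableSet_singleton y)), Set.inter_comm]
  rfl

theorem isFairBaseRate_of_subpop_eq_mul (hxs : Measurable xs) {Q : Measure (X × Fin C)}
    {k : Fin S → ℝ≥0∞} {r : Fin C → ℝ≥0∞} (hk₀ : ∀ s, k s ≠ 0) (hk : ∀ s, k s ≠ ∞)
    (hr : ∑ y, r y = 1) (hQ : ∀ s y, Q (subpop xs s y) = k s * r y) :
    IsFairBaseRate xs Q := by
  suffices h : ∀ y s, (Q[|{z | xs z.1 = s}]) {z | z.2 = y} = r y from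
    fun y i j => (h y i).trans (h y j).symm
  intro y s
  rw [cond_apply (measurableSet_group hxs s), measure_group_eq_sum_subpop]
  change (∑ y', Q (subpop xs s y'))⁻¹ * Q (subpop xs s y) = r y
  simp_rw [hQ, ← Finset.mul_sum, hr, mul_one, ← mul_assoc, ENNReal.inv_mul_cancel (hk₀ s) (hk s),
    one_mul]

theorem IsFairBaseRate.exists_subpop_eq_mul (hxs : Measurable xs) {Q : Measure (X × Fin C)}
    [IsProbabilityMeasure Q] (hfair : IsFairBaseRate xs Q) (hQ : ∀ s y, Q (subpop xs s y) ≠ 0) :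
    ∃ (k : Fin S → ℝ) (r : Fin C → ℝ), (∀ s, 0 < k s) ∧ (∀ y, 0 < r y) ∧ ∑ s, k s = 1 ∧
      ∑ y, r y = 1 ∧ ∀ s y, Q (subpop xs s y) = ENNReal.ofReal (k s * r y) := by
  obtain ⟨z₀⟩ := nonempty_of_isProbabilityMeasure Q
  set G : Fin S → Set (X × Fin C) := fun s => {z | xs z.1 = s}
  have hG₀ : ∀ s, Q (G s) ≠ 0 := fun s =>
    pos_iff_ne_zero.1 <| (pos_iff_ne_zero.2 (hQ s z₀.2)).trans_le (measure_mono fun _ hz => hz.1)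
  set r : Fin C → ℝ≥0∞ := fun y => (Q[|G (xs z₀.1)]) {z | z.2 = y}
  have hmul : ∀ s y, Q (subpop xs s y) = Q (G s) * r y := fun s y => by
    have hfair' : (Q[|G s]) {z | z.2 = y} = r y := hfair y s (xs z₀.1)
    rw [← hfair', mul_comm, cond_mul_eq_inter (measurableSet_group hxs s)]
    rfl
  have hk₁ : ∑ s, Q (G s) = 1 :=
    (sum_measure_fiber (hxs.comp measurable_fst) Q).trans measure_univ
  have hr₁ : ∑ y, r y = 1 := by
    have := cond_isProbabilityMeasure (hG₀ (xs z₀.1))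
    exact (sum_measure_fiber measurable_snd _).trans measure_univ
  refine ⟨fun s => (Q (G s)).toReal, fun y => (r y).toReal,
    fun s => ENNReal.toReal_pos (hG₀ s) (measure_ne_top _ _),
    fun y => ENNReal.toReal_pos
      (right_ne_zero_of_mul ((hmul (xs z₀.1) y).symm.trans_ne (hQ _ y))) (measure_ne_top _ _),
    ?_, ?_, fun s y => ?_⟩
  · rw [← ENNReal.toReal_sum fun s _ => measure_ne_top _ _, hk₁, ENNReal.toReal_one]
  · rw [← ENNReal.toReal_sum fun y _ => measure_ne_top _ _, hr₁, ENNReal.toReal_one]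
  · rw [hmul, ENNReal.ofReal_mul ENNReal.toReal_nonneg, ENNReal.ofReal_toReal (measure_ne_top _ _),
      ENNReal.ofReal_toReal (measure_ne_top _ _)]

end FairBaseRate

section SensitiveShift

variable {X : Type*} [MeasurableSpace X] {S C : ℕ} {xs : X → Fin S} {P : Measure (X × Fin C)}
  {k : Fin S → ℝ} {r : Fin C → ℝ}

noncomputable def sensitiveShift (xs : X → Fin S) (P : Measure (X × Fin C)) (k : Fin S → ℝ)
    (r : Fin C → ℝ) : Measure (X × Fin C) :=
  fiberMixture (subpopIndex xs) P fun i => ENNReal.ofReal (k i.1 * r i.2)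

theorem sum_ofReal_mul_eq_one (hk : k ∈ stdSimplex ℝ (Fin S)) (hr : r ∈ stdSimplex ℝ (Fin C)) :
    ∑ i : Fin S × Fin C, ENNReal.ofReal (k i.1 * r i.2) = 1 := by
  rw [← ENNReal.ofReal_sum_of_nonneg fun i _ => mul_nonneg (hk.1 i.1) (hr.1 i.2),
    Fintype.sum_prod_type, ← Finset.sum_mul_sum, hk.2, hr.2, mul_one, ENNReal.ofReal_one]

theorem integral_sensitiveShift (hk : ∀ s, 0 ≤ k s) (hr : ∀ y, 0 ≤ r y) {f : X × Fin C → ℝ}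
    (hf : ∀ s y, Integrable f (P[|subpop xs s y])) :
    ∫ z, f z ∂sensitiveShift xs P k r = ∑ s, ∑ y, k s * r y * ∫ z, f z ∂P[|subpop xs s y] := by
  rw [sensitiveShift, integral_fiberMixture (fun _ => ENNReal.ofReal_ne_top)
    fun i => by simpa [subpop_eq_preimage] using hf i.1 i.2, Fintype.sum_prod_type]
  simp_rw [ENNReal.toReal_ofReal (mul_nonneg (hk _) (hr _)), subpop_eq_preimage, smul_eq_mul]

variable [IsProbabilityMeasure P]

theorem sensitiveShift_apply_subpop (hxs : Measurable xs) (hP : ∀ s y, P (subpop xs s y) ≠ 0)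
    (s : Fin S) (y : Fin C) :
    sensitiveShift xs P k r (subpop xs s y) = ENNReal.ofReal (k s * r y) := by
  simp only [subpop_eq_preimage] at hP ⊢
  exact fiberMixture_apply_fiber (measurable_subpopIndex hxs) _ (hP s y)

theorem isProbabilityMeasure_sensitiveShift (hP : ∀ s y, P (subpop xs s y) ≠ 0)
    (hk : k ∈ stdSimplex ℝ (Fin S)) (hr : r ∈ stdSimplex ℝ (Fin C)) :
    IsProbabilityMeasure (sensitiveShift xs P k r) :=
  isProbabilityMeasure_fiberMixture (fun i => by simpa [subpop_eq_preimage] using hP i.1 i.2)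
    (sum_ofReal_mul_eq_one hk hr)

theorem isFairBaseRate_sensitiveShift (hxs : Measurable xs) (hP : ∀ s y, P (subpop xs s y) ≠ 0)
    (hk : ∀ s, 0 < k s) (hr : r ∈ stdSimplex ℝ (Fin C)) :
    IsFairBaseRate xs (sensitiveShift xs P k r) :=
  isFairBaseRate_of_subpop_eq_mul hxs (k := fun s => ENNReal.ofReal (k s))
    (r := fun y => ENNReal.ofReal (r y)) (fun s => ENNReal.ofReal_pos.2 (hk s) |>.ne')
    (fun _ => ENNReal.ofReal_ne_top)
    (by rw [← ENNReal.ofReal_sum_of_nonneg fun y _ => hr.1 y, hr.2, ENNReal.ofReal_one])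
    fun s y => by rw [sensitiveShift_apply_subpop hxs hP, ENNReal.ofReal_mul (hk s).le]

theorem cond_sensitiveShift (hxs : Measurable xs) (hP : ∀ s y, P (subpop xs s y) ≠ 0)
    (hk : ∀ s, 0 < k s) (hr : ∀ y, 0 < r y) (s : Fin S) (y : Fin C) :
    (sensitiveShift xs P k r)[|subpop xs s y] = P[|subpop xs s y] := by
  simp only [subpop_eq_preimage] at hP ⊢
  exact cond_fiberMixture (measurable_subpopIndex hxs) (hP s y)
    (ENNReal.ofReal_pos.2 (mul_pos (hk s) (hr y))).ne' ENNReal.ofReal_ne_top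

theorem hellinger_sensitiveShift (hxs : Measurable xs) (hP : ∀ s y, P (subpop xs s y) ≠ 0)
    (hk : k ∈ stdSimplex ℝ (Fin S)) (hr : r ∈ stdSimplex ℝ (Fin C)) :
    hellinger P (sensitiveShift xs P k r) =
      √(1 - bhattacharyya (fun s y => (P (subpop xs s y)).toReal) k r) := by
  rw [sensitiveShift, hellinger_fiberMixture (measurable_subpopIndex hxs)
    (fun i => by simpa [subpop_eq_preimage] using hP i.1 i.2) (fun _ => ENNReal.ofReal_ne_top)
    (sum_ofReal_mul_eq_one hk hr), Fintype.sum_prod_type]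
  simp_rw [bhattacharyya, subpop_eq_preimage, ENNReal.toReal_ofReal (mul_nonneg (hk.1 _) (hr.1 _)),
    mul_assoc]

theorem hellinger_sensitiveShift_le_iff (hxs : Measurable xs)
    (hP : ∀ s y, P (subpop xs s y) ≠ 0) (hk : k ∈ stdSimplex ℝ (Fin S))
    (hr : r ∈ stdSimplex ℝ (Fin C)) {ρ : ℝ} (hρ : 0 ≤ ρ) :
    hellinger P (sensitiveShift xs P k r) ≤ ρ ↔
      1 - ρ ^ 2 ≤ bhattacharyya (fun s y => (P (subpop xs s y)).toReal) k r := by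
  rw [hellinger_sensitiveShift hxs hP hk hr, Real.sqrt_le_iff, sub_le_comm]
  exact and_iff_right hρ

theorem eq_sensitiveShift_of_cond_eq (hxs : Measurable xs) (hP : ∀ s y, P (subpop xs s y) ≠ 0)
    {Q : Measure (X × Fin C)} [IsProbabilityMeasure Q] (hfair : IsFairBaseRate xs Q)
    (hcond : ∀ s y, Q[|subpop xs s y] = P[|subpop xs s y]) :
    ∃ k r, (k ∈ stdSimplex ℝ (Fin S) ∧ r ∈ stdSimplex ℝ (Fin C)) ∧
      ((∀ s, 0 < k s) ∧ ∀ y, 0 < r y) ∧ Q = sensitiveShift xs P k r := by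
  -- conditioning on a null set gives `0`, never the probability measure `P[|subpop xs s y]`
  have hQ : ∀ s y, Q (subpop xs s y) ≠ 0 := fun s y hQ₀ => by
    have := cond_isProbabilityMeasure (hP s y)
    simpa [← hcond s y, cond_eq_zero_of_meas_eq_zero hQ₀] using
      measure_univ (μ := P[|subpop xs s y])
  obtain ⟨k, r, hk, hr, hk₁, hr₁, hQkr⟩ := hfair.exists_subpop_eq_mul hxs hQ
  refine ⟨k, r, ⟨⟨fun s => (hk s).le, hk₁⟩, ⟨fun y => (hr y).le, hr₁⟩⟩, ⟨hk, hr⟩, ?_⟩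
  rw [eq_fiberMixture_of_cond_eq (Q := Q) (measurable_subpopIndex hxs)
    (fun i => by simpa [subpop_eq_preimage] using hcond i.1 i.2), sensitiveShift]
  congr with i
  simpa [subpop_eq_preimage] using hQkr i.1 i.2

end SensitiveShift

theorem setOf_integral_sensitiveShift_eq_image {X : Type*} [MeasurableSpace X] {S C : ℕ}
    {xs : X → Fin S} (hxs : Measurable xs) {P : Measure (X × Fin C)} [IsProbabilityMeasure P]
    (hP : ∀ s y, P (subpop xs s y) ≠ 0) {ρ : ℝ} (hρ : 0 ≤ ρ) {f : X × Fin C → ℝ}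
    (hf : ∀ s y, Integrable f (P[|subpop xs s y])) :
    {L | ∃ Q : Measure (X × Fin C), IsProbabilityMeasure Q ∧ IsFairBaseRate xs Q ∧
      hellinger P Q ≤ ρ ∧ (∀ s y, Q[|subpop xs s y] = P[|subpop xs s y]) ∧
      L = ∫ z, f z ∂Q} =
    (fun x => ∑ s, ∑ y, x.1 s * x.2 y * ∫ z, f z ∂P[|subpop xs s y]) ''
      (certFeasible (fun s y => (P (subpop xs s y)).toReal) ρ ∩
        {x | (∀ s, 0 < x.1 s) ∧ ∀ y, 0 < x.2 y}) := by
  ext L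
  constructor
  · rintro ⟨Q, hQ, hfair, hH, hcond, rfl⟩
    obtain ⟨k, r, ⟨hk, hr⟩, hpos, rfl⟩ := eq_sensitiveShift_of_cond_eq hxs hP hfair hcond
    exact ⟨(k, r), ⟨⟨⟨hk, hr⟩, (hellinger_sensitiveShift_le_iff hxs hP hk hr hρ).1 hH⟩, hpos⟩,
      (integral_sensitiveShift hk.1 hr.1 hf).symm⟩
  · rintro ⟨⟨k, r⟩, ⟨⟨⟨hk, hr⟩, hH⟩, hpos⟩, rfl⟩
    exact ⟨sensitiveShift xs P k r, isProbabilityMeasure_sensitiveShift hP hk hr,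
      isFairBaseRate_sensitiveShift hxs hP hpos.1 hr,
      (hellinger_sensitiveShift_le_iff hxs hP hk hr hρ).2 hH,
      cond_sensitiveShift hxs hP hpos.1 hpos.2, (integral_sensitiveShift hk.1 hr.1 hf).symm⟩

theorem statement_4_general {X : Type*} [MeasurableSpace X] {S C : ℕ}
    (xs : X → Fin S) (hxs : Measurable xs)
    (P : Measure (X × Fin C)) [IsProbabilityMeasure P]
    (hpos : ∀ s y, 0 < P (subpop xs s y))
    (h : X → Fin C) (hh : Measurable h)
    (ℓ : Fin C → Fin C → ℝ)
    (ρ : ℝ) (hρ : 0 < ρ) :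
    let E : Fin S → Fin C → ℝ := fun s y => ∫ p, ℓ (h p.1) p.2 ∂(P[|subpop xs s y])
    let A : Set ℝ := {L | ∃ Q : Measure (X × Fin C), IsProbabilityMeasure Q ∧
      IsFairBaseRate xs Q ∧ hellinger P Q ≤ ρ ∧
      (∀ s y, Q[|subpop xs s y] = P[|subpop xs s y]) ∧
      L = ∫ p, ℓ (h p.1) p.2 ∂Q}
    let B : Set ℝ := {L | ∃ (k : Fin S → ℝ) (r : Fin C → ℝ),
      (∀ s, 0 ≤ k s) ∧ (∀ y, 0 ≤ r y) ∧ (∑ s, k s = 1) ∧ (∑ y, r y = 1) ∧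
      1 - ρ ^ 2 - ∑ s, ∑ y, Real.sqrt ((P (subpop xs s y)).toReal * k s * r y) ≤ 0 ∧
      L = ∑ s, ∑ y, k s * r y * E s y}
    (A.Nonempty ∨ B.Nonempty) → sSup A = sSup B ∧ sSup B ∈ B := by
  intro E A B hne
  set p : Fin S → Fin C → ℝ := fun s y => (P (subpop xs s y)).toReal
  set Fpos := certFeasible p ρ ∩ {x | (∀ s, 0 < x.1 s) ∧ ∀ y, 0 < x.2 y}
  set risk := fun x : (Fin S → ℝ) × (Fin C → ℝ) => ∑ s, ∑ y, x.1 s * x.2 y * E s y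
  have hloss : Measurable fun z : X × Fin C => (h z.1, z.2) :=
    (hh.comp measurable_fst).prodMk measurable_snd
  have hA : A = risk '' Fpos :=
    setOf_integral_sensitiveShift_eq_image hxs (fun s y => (hpos s y).ne') hρ.le fun s y =>
      (Integrable.of_finite (f := fun q : Fin C × Fin C => ℓ q.1 q.2)).comp_measurable hloss
  have hB : B = risk '' certFeasible p ρ := setOf_certFeasible_eq_image p ρ E
  have hdense : certFeasible p ρ ⊆ closure Fpos := certFeasible_subset_closure_pos
    (fun s y => ENNReal.toReal_pos (hpos s y).ne' (measure_ne_top P _)) ρ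
  have hFpos : Fpos.Nonempty := by
    rw [hA, hB] at hne
    exact hne.elim Set.Nonempty.of_image fun hF => closure_nonempty_iff.1 (hF.of_image.mono hdense)
  rw [hA, hB]
  exact csSup_image_eq_of_subset_closure (by fun_prop) (isCompact_certFeasible ρ) hFpos
    Set.inter_subset_left hdense

/-- tight fairness certificate under sensitive shifting.
`P` is a probability distribution on `X × Fin C` with every subpopulation probability
`p_{s,y} = Pr_P[X_s = s, Y = y]` positive, `h` is a classifier, `ℓ` a nonnegative loss, and
`E_{s,y}` the expected loss on the conditional `P_{s,y}`.  For any `ρ > 0`, the supremum of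
the expected loss over all fair base rate distributions `Q` with `H(P,Q) ≤ ρ` and
`Q_{s,y} = P_{s,y}` for all `s, y` equals the maximum (attained supremum) of
`Σ_{s,y} k_s r_y E_{s,y}` over the stated convex feasible set, whenever either feasible set
is nonempty. -/
theorem statement_4 {X : Type*} [MeasurableSpace X] {S C : ℕ}
    (xs : X → Fin S) (hxs : Measurable xs)
    (P : Measure (X × Fin C)) [IsProbabilityMeasure P]
    (hpos : ∀ s y, 0 < P (subpop xs s y))
    (h : X → Fin C) (hh : Measurable h)
    (ℓ : Fin C → Fin C → ℝ) (hℓ : ∀ a b, 0 ≤ ℓ a b)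
    (ρ : ℝ) (hρ : 0 < ρ) :
    let E : Fin S → Fin C → ℝ := fun s y => ∫ p, ℓ (h p.1) p.2 ∂(P[|subpop xs s y])
    let A : Set ℝ := {L | ∃ Q : Measure (X × Fin C), IsProbabilityMeasure Q ∧
      IsFairBaseRate xs Q ∧ hellinger P Q ≤ ρ ∧
      (∀ s y, Q[|subpop xs s y] = P[|subpop xs s y]) ∧
      L = ∫ p, ℓ (h p.1) p.2 ∂Q}
    let B : Set ℝ := {L | ∃ (k : Fin S → ℝ) (r : Fin C → ℝ),
      (∀ s, 0 ≤ k s) ∧ (∀ y, 0 ≤ r y) ∧ (∑ s, k s = 1) ∧ (∑ y, r y = 1) ∧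
      1 - ρ ^ 2 - ∑ s, ∑ y, Real.sqrt ((P (subpop xs s y)).toReal * k s * r y) ≤ 0 ∧
      L = ∑ s, ∑ y, k s * r y * E s y}
    (A.Nonempty ∨ B.Nonempty) → sSup A = sSup B ∧ sSup B ∈ B :=
  statement_4_general xs hxs P hpos h hh ℓ ρ hρ
end

section
/- Let P be a distribution on X × [C] with p_{s,y} := Pr_P[X_s = s, Y = y] > 0 for all s, y, and let Q be any fair base rate distribution with H(P,Q) ≤ ρ and Pr_Q[X_s = s, Y = y] > 0 for all s, y. Define k_s := Pr_Q[X_s = s], r_y := Pr_Q[Y = y], Q_{s,y} the conditional of Q given X_s = s, Y = y, and ρ_{s,y} := H(P_{s,y}, Q_{s,y}). Then k_s ≥ 0, r_y ≥ 0, Σ_s k_s = 1, Σ_y r_y = 1, Pr_Q[X_s = s, Y = y] = k_s r_y, Σ_{s,y} √(p_{s,y} k_s r_y)(1 − ρ_{s,y}²) ≥ 1 − ρ², and E_{(X,Y)∼Q}[ℓ(h(X),Y)] = Σ_{s,y} k_s r_y E_{(X,Y)∼Q_{s,y}}[ℓ(h(X),Y)] for any classifier h and nonnegative loss ℓ. 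-/
/-!
Write `1 - H(P,Q)²` as the affinity `∫ √(p q) dμ`, which does not depend on the dominating
measure `μ`, and split the integral over the cells `A = {X_s = s, Y = y}`. On a cell, the
densities of `P[|A]` and `Q[|A]` are those of `P` and `Q` rescaled by `1 / P(A)` and `1 / Q(A)`,
so the cell contributes `√(P(A) Q(A)) (1 - H(P[|A], Q[|A])²)`. Fair base rates make
`Pr_Q[Y = y | X_s = s]` independent of `s`, hence equal to `Pr_Q[Y = y]` by the law of total
probability, which gives `Q(A) = k_s r_y`; the loss decomposition is the same cell splitting
applied to `E_Q`.
-/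

open MeasureTheory ProbabilityTheory

section Hellinger

variable {Z : Type*} [MeasurableSpace Z]

noncomputable def sqrtDensityMul (P Q μ : Measure Z) (z : Z) : ℝ :=
  √((P.rnDeriv μ z).toReal * (Q.rnDeriv μ z).toReal)

lemma integrable_sqrtDensityMul (P Q μ : Measure Z) [IsFiniteMeasure P] [IsFiniteMeasure Q] :
    Integrable (sqrtDensityMul P Q μ) μ := by
  refine ((Measure.integrable_toReal_rnDeriv (μ := P)).add
    (Measure.integrable_toReal_rnDeriv (μ := Q))).mono'
    ((Measure.measurable_rnDeriv P μ).ennreal_toReal.mul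
      (Measure.measurable_rnDeriv Q μ).ennreal_toReal).sqrt.aestronglyMeasurable
    (.of_forall fun z => ?_)
  have hp : 0 ≤ (P.rnDeriv μ z).toReal := ENNReal.toReal_nonneg
  have hq : 0 ≤ (Q.rnDeriv μ z).toReal := ENNReal.toReal_nonneg
  rw [sqrtDensityMul, Real.norm_of_nonneg (Real.sqrt_nonneg _), Pi.add_apply,
    ← Real.sqrt_sq (add_nonneg hp hq)]
  exact Real.sqrt_le_sqrt (by nlinarith)

lemma one_sub_hellinger_sq_eq_integral_add (P Q : Measure Z) [IsProbabilityMeasure P]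
    [IsProbabilityMeasure Q] :
    1 - hellinger P Q ^ 2 = ∫ z, sqrtDensityMul P Q (P + Q) z ∂(P + Q) := by
  rw [hellinger, Real.sq_sqrt (mul_nonneg (by norm_num) (integral_nonneg fun z => sq_nonneg _))]
  set p : Z → ℝ := fun z => (P.rnDeriv (P + Q) z).toReal
  set q : Z → ℝ := fun z => (Q.rnDeriv (P + Q) z).toReal
  have hp : Integrable p (P + Q) := Measure.integrable_toReal_rnDeriv
  have hq : Integrable q (P + Q) := Measure.integrable_toReal_rnDeriv
  have hp_one : ∫ z, p z ∂(P + Q) = 1 := by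
    simp [p, Measure.integral_toReal_rnDeriv (Measure.AbsolutelyContinuous.rfl.add_right Q)]
  have hq_one : ∫ z, q z ∂(P + Q) = 1 := by
    simp [q, Measure.integral_toReal_rnDeriv (Measure.AbsolutelyContinuous.rfl.add_right' P)]
  have hsq : ∀ z, (√(p z) - √(q z)) ^ 2 = p z + q z - 2 * sqrtDensityMul P Q (P + Q) z := by
    intro z
    rw [sqrtDensityMul, Real.sqrt_mul ENNReal.toReal_nonneg, sub_sq,
      Real.sq_sqrt ENNReal.toReal_nonneg, Real.sq_sqrt ENNReal.toReal_nonneg]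
    ring
  rw [integral_congr_ae (.of_forall hsq), integral_sub (f := fun z => p z + q z) (hp.add hq)
    ((integrable_sqrtDensityMul P Q _).const_mul 2), integral_add hp hq, integral_const_mul,
    hp_one, hq_one]
  ring

lemma integral_sqrtDensityMul_eq_of_absolutelyContinuous {P Q ν μ : Measure Z}
    [SigmaFinite P] [SigmaFinite Q] [SigmaFinite ν] [SigmaFinite μ]
    (hPν : P ≪ ν) (hQν : Q ≪ ν) (hνμ : ν ≪ μ) :
    ∫ z, sqrtDensityMul P Q μ z ∂μ = ∫ z, sqrtDensityMul P Q ν z ∂ν := by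
  rw [← integral_toReal_rnDeriv_mul hνμ]
  refine integral_congr_ae ?_
  filter_upwards [Measure.rnDeriv_mul_rnDeriv (κ := μ) hPν,
    Measure.rnDeriv_mul_rnDeriv (κ := μ) hQν] with z hPz hQz
  simp only [sqrtDensityMul, ← hPz, ← hQz, Pi.mul_apply, ENNReal.toReal_mul]
  have hd : 0 ≤ (ν.rnDeriv μ z).toReal := ENNReal.toReal_nonneg
  rw [mul_mul_mul_comm, mul_comm, Real.sqrt_mul (mul_self_nonneg _), Real.sqrt_mul_self hd]

end Hellinger

section Cond

variable {Z : Type*} [MeasurableSpace Z] {P Q μ : Measure Z} {A : Set Z}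

lemma one_sub_hellinger_sq_eq_integral [IsProbabilityMeasure P] [IsProbabilityMeasure Q]
    [SigmaFinite μ] (hP : P ≪ μ) (hQ : Q ≪ μ) :
    1 - hellinger P Q ^ 2 = ∫ z, sqrtDensityMul P Q μ z ∂μ := by
  rw [one_sub_hellinger_sq_eq_integral_add, integral_sqrtDensityMul_eq_of_absolutelyContinuous
    (Measure.AbsolutelyContinuous.rfl.add_right Q) (Measure.AbsolutelyContinuous.rfl.add_right' P)
    (hP.add_left hQ)]

lemma rnDeriv_cond_ae [IsFiniteMeasure P] [SigmaFinite μ] (hA : MeasurableSet A) (hPA : P A ≠ 0) :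
    (P[|A]).rnDeriv μ =ᵐ[μ] fun z => (P A)⁻¹ * A.indicator (P.rnDeriv μ) z := by
  filter_upwards [Measure.rnDeriv_smul_left_of_ne_top (P.restrict A) μ
    (ENNReal.inv_ne_top.mpr hPA), Measure.rnDeriv_restrict P μ hA] with z hsmul hrestrict
  rw [ProbabilityTheory.cond, hsmul, Pi.smul_apply, hrestrict, smul_eq_mul]

lemma sqrtDensityMul_cond_ae [IsFiniteMeasure P] [IsFiniteMeasure Q] [SigmaFinite μ]
    (hA : MeasurableSet A) (hPA : P A ≠ 0) (hQA : Q A ≠ 0) :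
    sqrtDensityMul (P[|A]) (Q[|A]) μ =ᵐ[μ]
      fun z => (√((P A).toReal * (Q A).toReal))⁻¹ * A.indicator (sqrtDensityMul P Q μ) z := by
  filter_upwards [rnDeriv_cond_ae hA hPA, rnDeriv_cond_ae hA hQA] with z hPz hQz
  by_cases hz : z ∈ A
  · simp only [sqrtDensityMul, hPz, hQz, Set.indicator_of_mem hz, ENNReal.toReal_mul,
      ENNReal.toReal_inv]
    rw [mul_mul_mul_comm, ← mul_inv, Real.sqrt_mul (inv_nonneg.mpr (by positivity)),
      Real.sqrt_inv]
  · simp [sqrtDensityMul, hPz, hQz, Set.indicator_of_notMem hz]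

lemma setIntegral_sqrtDensityMul [IsFiniteMeasure P] [IsFiniteMeasure Q]
    [SigmaFinite μ] (hP : P ≪ μ) (hQ : Q ≪ μ) (hA : MeasurableSet A) (hPA : P A ≠ 0)
    (hQA : Q A ≠ 0) :
    ∫ z in A, sqrtDensityMul P Q μ z ∂μ =
      √((P A).toReal * (Q A).toReal) * (1 - hellinger (P[|A]) (Q[|A]) ^ 2) := by
  have : IsProbabilityMeasure (P[|A]) := cond_isProbabilityMeasure hPA
  have : IsProbabilityMeasure (Q[|A]) := cond_isProbabilityMeasure hQA
  have hPQ : 0 < √((P A).toReal * (Q A).toReal) :=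
    Real.sqrt_pos.mpr (mul_pos (ENNReal.toReal_pos hPA (measure_ne_top P A))
      (ENNReal.toReal_pos hQA (measure_ne_top Q A)))
  rw [one_sub_hellinger_sq_eq_integral (cond_absolutelyContinuous.trans hP)
    (cond_absolutelyContinuous.trans hQ), integral_congr_ae (sqrtDensityMul_cond_ae hA hPA hQA),
    integral_const_mul, integral_indicator hA, mul_inv_cancel_left₀ hPQ.ne']

lemma setIntegral_eq_toReal_mul_integral_cond [IsFiniteMeasure μ] (hA : μ A ≠ 0) (g : Z → ℝ) :
    ∫ z in A, g z ∂μ = (μ A).toReal * ∫ z, g z ∂(μ[|A]) := by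
  rw [ProbabilityTheory.cond, integral_smul_measure, ENNReal.toReal_inv, smul_eq_mul,
    mul_inv_cancel_left₀ (ENNReal.toReal_ne_zero.mpr ⟨hA, measure_ne_top μ A⟩)]

end Cond

section Fibers

variable {Ω ι : Type*} [MeasurableSpace Ω] [Fintype ι] [MeasurableSpace ι]
  [DiscreteMeasurableSpace ι] {f : Ω → ι}

lemma integral_eq_sum_setIntegral_fiber {E : Type*} [NormedAddCommGroup E] [NormedSpace ℝ E]
    {μ : Measure Ω} (hf : Measurable f) {g : Ω → E} (hg : Integrable g μ) :
    ∫ ω, g ω ∂μ = ∑ i, ∫ ω in f ⁻¹' {i}, g ω ∂μ := by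
  have hcover : ⋃ i, f ⁻¹' {i} = Set.univ := by ext; simp
  rw [← integral_iUnion_fintype (fun i => hf (measurableSet_singleton i))
    (fun i j hij => (Set.disjoint_singleton.mpr hij).preimage f) (fun i => hg.integrableOn),
    hcover, setIntegral_univ]

lemma sum_toReal_measure_fiber (μ : Measure Ω) [IsProbabilityMeasure μ] (hf : Measurable f) :
    ∑ i, (μ (f ⁻¹' {i})).toReal = 1 := by
  rw [← ENNReal.toReal_sum fun i _ => measure_ne_top μ _,
    sum_measure_preimage_singleton _ fun i _ => hf (measurableSet_singleton i)]
  simp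

lemma measure_fiber_inter_eq_mul_of_cond_eq (μ : Measure Ω) [IsProbabilityMeasure μ]
    (hf : Measurable f) {D : Set Ω} (hcond : ∀ i j, μ[D | f ⁻¹' {i}] = μ[D | f ⁻¹' {j}])
    (i : ι) : μ (f ⁻¹' {i} ∩ D) = μ (f ⁻¹' {i}) * μ D := by
  have hfiber : ∀ j, μ[D | f ⁻¹' {i}] * μ (f ⁻¹' {j}) = μ (f ⁻¹' {j} ∩ D) := fun j => by
    rw [hcond i j, cond_mul_eq_inter (hf (measurableSet_singleton j))]
  have htotal : μ D = μ[D | f ⁻¹' {i}] := by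
    calc μ D = ∑ j, μ (f ⁻¹' {j}) • μ[D | f ⁻¹' {j}] := by
          conv_lhs => rw [← sum_meas_smul_cond_fiber hf μ]
          simp
      _ = ∑ j, μ[D | f ⁻¹' {i}] * μ (f ⁻¹' {j}) := by
          simp only [smul_eq_mul, hcond _ i, mul_comm]
      _ = μ[D | f ⁻¹' {i}] := by
          rw [← Finset.mul_sum, sum_measure_preimage_singleton _
            fun j _ => hf (measurableSet_singleton j)]
          simp
  rw [← hfiber i, htotal, mul_comm]

lemma one_sub_hellinger_sq_eq_sum_fiber {P Q : Measure Ω} [IsProbabilityMeasure P]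
    [IsProbabilityMeasure Q] (hf : Measurable f) (hP : ∀ i, P (f ⁻¹' {i}) ≠ 0)
    (hQ : ∀ i, Q (f ⁻¹' {i}) ≠ 0) :
    1 - hellinger P Q ^ 2 = ∑ i, √((P (f ⁻¹' {i})).toReal * (Q (f ⁻¹' {i})).toReal) *
      (1 - hellinger (P[|f ⁻¹' {i}]) (Q[|f ⁻¹' {i}]) ^ 2) := by
  rw [one_sub_hellinger_sq_eq_integral_add,
    integral_eq_sum_setIntegral_fiber hf (integrable_sqrtDensityMul P Q _)]
  exact Finset.sum_congr rfl fun i _ => setIntegral_sqrtDensityMul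
    (Measure.AbsolutelyContinuous.rfl.add_right Q) (Measure.AbsolutelyContinuous.rfl.add_right' P)
    (hf (measurableSet_singleton i)) (hP i) (hQ i)

end Fibers

lemma preimage_singleton_eq_subpop {X : Type*} {S C : ℕ} (xs : X → Fin S) (s : Fin S)
    (y : Fin C) : (fun p : X × Fin C => (xs p.1, p.2)) ⁻¹' {(s, y)} = subpop xs s y := by
  ext; simp [subpop]

/-- properties of a feasible shifted distribution under general shifting.
`P` is a probability distribution on `X × Fin C` with all subpopulation probabilities
positive, and `Q` is any fair base rate distribution with `H(P,Q) ≤ ρ` and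
`Pr_Q[X_s = s, Y = y] > 0` for all `s, y`.  With `k_s = Pr_Q[X_s = s]`, `r_y = Pr_Q[Y = y]`,
`Q_{s,y}` the conditional of `Q` on the subpopulation, and
`ρ_{s,y} = H(P_{s,y}, Q_{s,y})`, we have nonnegativity and unity of `k, r`,
`Pr_Q[X_s = s, Y = y] = k_s r_y`, the distance inequality
`Σ_{s,y} √(p_{s,y} k_s r_y)(1 − ρ_{s,y}²) ≥ 1 − ρ²`, and the loss decomposition
`E_Q[ℓ(h(X),Y)] = Σ_{s,y} k_s r_y E_{Q_{s,y}}[ℓ(h(X),Y)]` for any classifier `h` and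
nonnegative loss `ℓ`. -/
theorem statement_9 {X : Type*} [MeasurableSpace X] {S C : ℕ}
    (xs : X → Fin S) (hxs : Measurable xs)
    (P Q : Measure (X × Fin C)) [IsProbabilityMeasure P] [IsProbabilityMeasure Q]
    (hpos : ∀ s y, 0 < P (subpop xs s y))
    (hQpos : ∀ s y, 0 < Q (subpop xs s y))
    (ρ : ℝ)
    (hfair : IsFairBaseRate xs Q)
    (hdist : hellinger P Q ≤ ρ) :
    let k : Fin S → ℝ := fun s => (Q {p | xs p.1 = s}).toReal
    let r : Fin C → ℝ := fun y => (Q {p | p.2 = y}).toReal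
    let ρs : Fin S → Fin C → ℝ :=
      fun s y => hellinger (P[|subpop xs s y]) (Q[|subpop xs s y])
    (∀ s, 0 ≤ k s) ∧ (∀ y, 0 ≤ r y) ∧ (∑ s, k s = 1) ∧ (∑ y, r y = 1) ∧
    (∀ s y, (Q (subpop xs s y)).toReal = k s * r y) ∧
    1 - ρ ^ 2 ≤ ∑ s, ∑ y,
      Real.sqrt ((P (subpop xs s y)).toReal * k s * r y) * (1 - ρs s y ^ 2) ∧
    ∀ (h : X → Fin C), Measurable h → ∀ (ℓ : Fin C → Fin C → ℝ), (∀ a b, 0 ≤ ℓ a b) →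
      ∫ p, ℓ (h p.1) p.2 ∂Q =
        ∑ s, ∑ y, k s * r y * ∫ p, ℓ (h p.1) p.2 ∂(Q[|subpop xs s y]) := by
  intro k r ρs
  have hxs₁ : Measurable fun p : X × Fin C => xs p.1 := hxs.comp measurable_fst
  have hφ : Measurable fun p : X × Fin C => (xs p.1, p.2) := hxs₁.prodMk measurable_snd
  have hPcell : ∀ i : Fin S × Fin C, P ((fun p : X × Fin C => (xs p.1, p.2)) ⁻¹' {i}) ≠ 0 :=
    fun ⟨s, y⟩ => by simpa [preimage_singleton_eq_subpop] using (hpos s y).ne'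
  have hQcell : ∀ i : Fin S × Fin C, Q ((fun p : X × Fin C => (xs p.1, p.2)) ⁻¹' {i}) ≠ 0 :=
    fun ⟨s, y⟩ => by simpa [preimage_singleton_eq_subpop] using (hQpos s y).ne'
  have hkr : ∀ s y, (Q (subpop xs s y)).toReal = k s * r y := fun s y => by
    rw [← ENNReal.toReal_mul]
    exact congrArg ENNReal.toReal (measure_fiber_inter_eq_mul_of_cond_eq Q hxs₁ (hfair y) s)
  refine ⟨fun s => ENNReal.toReal_nonneg, fun y => ENNReal.toReal_nonneg,
    sum_toReal_measure_fiber Q hxs₁, sum_toReal_measure_fiber Q measurable_snd, hkr, ?_, ?_⟩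
  · calc 1 - ρ ^ 2 ≤ 1 - hellinger P Q ^ 2 := by
          gcongr
          exact Real.sqrt_nonneg _
      _ = _ := by
          rw [one_sub_hellinger_sq_eq_sum_fiber hφ hPcell hQcell, Fintype.sum_prod_type]
          simp only [preimage_singleton_eq_subpop, hkr, mul_assoc, ρs]
  · intro h hh ℓ _
    have hloss : Integrable (fun p => ℓ (h p.1) p.2) Q :=
      (Integrable.of_finite (f := fun q : Fin C × Fin C => ℓ q.1 q.2)).comp_measurable
        ((hh.comp measurable_fst).prodMk measurable_snd)
    rw [integral_eq_sum_setIntegral_fiber hφ hloss, Fintype.sum_prod_type]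
    simp only [preimage_singleton_eq_subpop,
      setIntegral_eq_toReal_mul_integral_cond (hQpos _ _).ne', hkr]
end

section
/- Let {P_i}_{i=1}^N be probability measures with pairwise disjoint supports, let p be a probability vector, and set P = Σ_{i=1}^N p_i P_i. Let {Q′_i}_{i=1}^N be probability measures each of which is singular with respect to P (its support is disjoint from the support of every P_j). Let α_i ∈ [0,1] and β_i ≥ 0 satisfy Σ_{i=1}^N (α_i p_i + β_i) = 1, and set Q = Σ_{i=1}^N (α_i p_i P_i + β_i Q′_i). Then the squared Hellinger distance satisfies H(P,Q)² = 1 − Σ_{i=1}^N √(α_i) p_i, i.e. H(P,Q) = sqrt(1 − Σ_i √(α_i) p_i). -/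
/-!
Up to null sets, `Z` splits into the pieces `A i ∩ T`, on which `P` and `Q` are the multiples
`p i • Ps i` and `(α i * p i) • Ps i` of one measure, and the complement of a set `T` separating
the `Q' j` from the `Ps i`, which carries only the singular part `∑ β i • Q' i` of `Q`. On a piece
where `P = a • ν` and `Q = b • ν` the densities with respect to `P + Q` are the constants
`a / (a + b)` and `b / (a + b)`, so the piece contributes `(√a - √b)² ν(Z)` to `∫ (√p - √q)²`;
the singular part contributes its mass `∑ β i`. Hence
`2 H² = ∑ p i (1 - √(α i))² + ∑ β i = 2 - 2 ∑ √(α i) p i`.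
-/

open MeasureTheory ProbabilityTheory

open Function
open scoped ENNReal

section IndicatorSums

variable {Z ι : Type*} [Fintype ι] {S : ι → Set Z}

lemma sum_indicator_const_apply_of_mem {M : Type*} [AddCommMonoid M]
    (hdisj : Pairwise (Disjoint on S)) (c : ι → M) {k : ι} {z : Z} (hz : z ∈ S k) :
    ∑ j, (S j).indicator (fun _ => c j) z = c k := by
  classical
  rw [Finset.sum_eq_single k (fun j _ hjk => Set.indicator_of_notMem
    (Set.disjoint_right.mp (hdisj hjk) hz) _) (by simp), Set.indicator_of_mem hz]

lemma map₂_sum_indicator_const {M N : Type*} [AddCommMonoid M] [AddCommMonoid N]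
    (hdisj : Pairwise (Disjoint on S)) (φ : M → M → N) (hφ : φ 0 0 = 0) (c d : ι → M) (z : Z) :
    φ (∑ k, (S k).indicator (fun _ => c k) z) (∑ k, (S k).indicator (fun _ => d k) z) =
      ∑ k, (S k).indicator (fun _ => φ (c k) (d k)) z := by
  by_cases hz : ∃ k, z ∈ S k
  · obtain ⟨k, hk⟩ := hz
    simp only [sum_indicator_const_apply_of_mem hdisj _ hk]
  · push Not at hz
    simp [Set.indicator_of_notMem (hz _), hφ]

end IndicatorSums

namespace MeasureTheory.Measure

lemma MutuallySingular.exists_separating_of_forall {Z ι κ : Type*} [MeasurableSpace Z]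
    [Countable ι] [Countable κ] {μ : ι → Measure Z} {ν : κ → Measure Z}
    (h : ∀ i j, μ i ⟂ₘ ν j) :
    ∃ T, MeasurableSet T ∧ (∀ i, μ i T = 0) ∧ ∀ j, ν j Tᶜ = 0 := by
  have hsum : sum μ ⟂ₘ sum ν :=
    MutuallySingular.sum_left.mpr fun i => MutuallySingular.sum_right.mpr (h i)
  exact ⟨hsum.nullSet, hsum.measurableSet_nullSet,
    fun i => (le_sum μ i).absolutelyContinuous hsum.measure_nullSet,
    fun j => (le_sum ν j).absolutelyContinuous hsum.measure_compl_nullSet⟩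

instance isFiniteMeasure_ofReal_smul {Z : Type*} [MeasurableSpace Z] (μ : Measure Z)
    [IsFiniteMeasure μ] (r : ℝ) : IsFiniteMeasure (ENNReal.ofReal r • μ) :=
  μ.smul_finite ENNReal.ofReal_ne_top

variable {Z ι : Type*} [MeasurableSpace Z] [Fintype ι] {S : ι → Set Z} {ν : ι → Measure Z}

lemma restrict_sum_smul_of_disjoint_carriers (hS : ∀ k, MeasurableSet (S k))
    (hdisj : Pairwise (Disjoint on S)) (hν : ∀ k, ν k (S k)ᶜ = 0) (m : ι → ℝ≥0∞) (k : ι) :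
    (∑ j, m j • ν j).restrict (S k) = m k • ν k := by
  rw [← sum_fintype, restrict_sum _ (hS k), sum_fintype, Finset.sum_eq_single k]
  · rw [restrict_smul, restrict_eq_self_of_ae_mem (mem_ae_iff.mpr (hν k))]
  · intro j _ hjk
    rw [restrict_smul, restrict_eq_zero.mpr
      (measure_mono_null ((hdisj hjk).symm.subset_compl_right) (hν j)), smul_zero]
  · exact fun h => absurd (Finset.mem_univ k) h

lemma withDensity_sum_indicator_const (hS : ∀ k, MeasurableSet (S k))
    (hdisj : Pairwise (Disjoint on S)) (hν : ∀ k, ν k (S k)ᶜ = 0) (m c : ι → ℝ≥0∞) :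
    (∑ j, m j • ν j).withDensity (fun z => ∑ k, (S k).indicator (fun _ => c k) z) =
      ∑ k, (c k * m k) • ν k := by
  have hsum : (fun z => ∑ k, (S k).indicator (fun _ => c k) z) =
      ∑' k, (S k).indicator (fun _ => c k) := by
    ext z; rw [tsum_fintype, Finset.sum_apply]
  rw [hsum, withDensity_tsum fun k => measurable_const.indicator (hS k), sum_fintype]
  refine Finset.sum_congr rfl fun k _ => ?_
  rw [withDensity_indicator (hS k), withDensity_const,
    restrict_sum_smul_of_disjoint_carriers hS hdisj hν, smul_smul]


end MeasureTheory.Measure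

lemma measureReal_univ_sum_smul {Z ι : Type*} [MeasurableSpace Z] [Fintype ι]
    {μ : ι → Measure Z} [∀ i, IsProbabilityMeasure (μ i)] {β : ι → ℝ} (hβ : ∀ i, 0 ≤ β i) :
    (∑ i, ENNReal.ofReal (β i) • μ i).real Set.univ = ∑ i, β i := by
  simp only [measureReal_def, Measure.coe_finsetSum, Finset.sum_apply, Measure.smul_apply,
    measure_univ, smul_eq_mul, mul_one]
  rw [← ENNReal.ofReal_sum_of_nonneg fun i _ => hβ i,
    ENNReal.toReal_ofReal (Finset.sum_nonneg fun i _ => hβ i)]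

lemma sq_sqrt_div_sub_sqrt_div_mul {a b : ℝ} (ha : 0 ≤ a) (hb : 0 ≤ b) :
    (√(a / (a + b)) - √(b / (a + b))) ^ 2 * (a + b) = (√a - √b) ^ 2 := by
  rcases (add_nonneg ha hb).eq_or_lt with hs | hs
  · obtain ⟨rfl, rfl⟩ : a = 0 ∧ b = 0 := ⟨by linarith, by linarith⟩
    simp
  · rw [Real.sqrt_div' a hs.le, Real.sqrt_div' b hs.le, ← sub_div, div_pow,
      Real.sq_sqrt hs.le, div_mul_cancel₀ _ hs.ne']

lemma sq_sqrt_sub_sqrt_mul {x y : ℝ} (hx : 0 ≤ x) (hy : 0 ≤ y) :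
    (√y - √(x * y)) ^ 2 = y - 2 * (√x * y) + x * y := by
  rw [Real.sqrt_mul hx]
  linear_combination (1 - √x) ^ 2 * Real.sq_sqrt hy + y * Real.sq_sqrt hx

section PiecewiseMultiples

variable {Z ι : Type*} [MeasurableSpace Z] [Fintype ι] {S : ι → Set Z} {ν : ι → Measure Z}

-- where `s k = 0` the junk value `x k / 0 = 0` is harmless, as `ν k` is then null
lemma rnDeriv_sum_smul_of_disjoint_carriers (hS : ∀ k, MeasurableSet (S k))
    (hdisj : Pairwise (Disjoint on S)) (hν : ∀ k, ν k (S k)ᶜ = 0) [∀ k, IsFiniteMeasure (ν k)]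
    {x s : ι → ℝ} (hx : ∀ k, 0 ≤ x k) (hxs : ∀ k, x k ≤ s k) :
    (∑ k, ENNReal.ofReal (x k) • ν k).rnDeriv (∑ k, ENNReal.ofReal (s k) • ν k)
      =ᵐ[∑ k, ENNReal.ofReal (s k) • ν k]
        fun z => ∑ k, (S k).indicator (fun _ => ENNReal.ofReal (x k / s k)) z := by
  have hdensity : ∑ k, ENNReal.ofReal (x k) • ν k =
      (∑ k, ENNReal.ofReal (s k) • ν k).withDensity fun z =>
        ∑ k, (S k).indicator (fun _ => ENNReal.ofReal (x k / s k)) z := by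
    rw [Measure.withDensity_sum_indicator_const hS hdisj hν]
    refine Finset.sum_congr rfl fun k _ => ?_
    rw [← ENNReal.ofReal_mul (div_nonneg (hx k) ((hx k).trans (hxs k))),
      div_mul_cancel_of_imp fun hs => le_antisymm (hs ▸ hxs k) (hx k)]
  rw [hdensity]
  exact Measure.rnDeriv_withDensity _ (Finset.measurable_sum _ fun k _ =>
    measurable_const.indicator (hS k))

theorem hellinger_sum_smul_of_disjoint_carriers (hS : ∀ k, MeasurableSet (S k))
    (hdisj : Pairwise (Disjoint on S)) (hν : ∀ k, ν k (S k)ᶜ = 0) [∀ k, IsFiniteMeasure (ν k)]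
    {a b : ι → ℝ} (ha : ∀ k, 0 ≤ a k) (hb : ∀ k, 0 ≤ b k) :
    hellinger (∑ k, ENNReal.ofReal (a k) • ν k) (∑ k, ENNReal.ofReal (b k) • ν k) =
      √((1 / 2) * ∑ k, (√(a k) - √(b k)) ^ 2 * (ν k).real Set.univ) := by
  set μ := ∑ k, ENNReal.ofReal (a k + b k) • ν k
  have hμ : ∑ k, ENNReal.ofReal (a k) • ν k + ∑ k, ENNReal.ofReal (b k) • ν k = μ := by
    simp only [μ, ← Finset.sum_add_distrib, ← add_smul,
      ENNReal.ofReal_add (ha _) (hb _)]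
  have hμS : ∀ k, μ.real (S k) = (a k + b k) * (ν k).real Set.univ := by
    intro k
    rw [measureReal_def, ← Measure.restrict_apply_univ,
      Measure.restrict_sum_smul_of_disjoint_carriers hS hdisj hν, Measure.smul_apply,
      smul_eq_mul, ENNReal.toReal_mul, ENNReal.toReal_ofReal (add_nonneg (ha k) (hb k)),
      measureReal_def]
  have hintegrand : (fun z => (√((∑ k, ENNReal.ofReal (a k) • ν k).rnDeriv μ z).toReal -
      √((∑ k, ENNReal.ofReal (b k) • ν k).rnDeriv μ z).toReal) ^ 2) =ᵐ[μ]
      fun z => ∑ k, (S k).indicator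
        (fun _ => (√(a k / (a k + b k)) - √(b k / (a k + b k))) ^ 2) z := by
    filter_upwards [rnDeriv_sum_smul_of_disjoint_carriers hS hdisj hν ha
        fun k => le_add_of_nonneg_right (hb k),
      rnDeriv_sum_smul_of_disjoint_carriers hS hdisj hν hb
        fun k => le_add_of_nonneg_left (ha k)] with z hfa hfb
    rw [hfa, hfb]
    refine (map₂_sum_indicator_const hdisj (fun u v : ℝ≥0∞ => (√u.toReal - √v.toReal) ^ 2)
      (by simp) _ _ z).trans ?_
    simp only [ENNReal.toReal_ofReal (div_nonneg (ha _) (add_nonneg (ha _) (hb _))),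
      ENNReal.toReal_ofReal (div_nonneg (hb _) (add_nonneg (ha _) (hb _)))]
  rw [hellinger, hμ, integral_congr_ae hintegrand,
    integral_finsetSum _ fun k _ => (integrable_const _).indicator (hS k)]
  congr 2
  refine Finset.sum_congr rfl fun k _ => ?_
  rw [integral_indicator_const _ (hS k), hμS, smul_eq_mul,
    ← sq_sqrt_div_sub_sqrt_div_mul (ha k) (hb k)]
  ring

theorem hellinger_sum_smul_add_singular (hS : ∀ k, MeasurableSet (S k))
    (hdisj : Pairwise (Disjoint on S)) (hν : ∀ k, ν k (S k)ᶜ = 0) [∀ k, IsFiniteMeasure (ν k)]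
    {R : Set Z} (hR : MeasurableSet R) (hRS : ∀ k, Disjoint R (S k))
    {σ : Measure Z} [IsFiniteMeasure σ] (hσ : σ Rᶜ = 0)
    {a b : ι → ℝ} (ha : ∀ k, 0 ≤ a k) (hb : ∀ k, 0 ≤ b k) :
    hellinger (∑ k, ENNReal.ofReal (a k) • ν k) (∑ k, ENNReal.ofReal (b k) • ν k + σ) =
      √((1 / 2) * (∑ k, (√(a k) - √(b k)) ^ 2 * (ν k).real Set.univ + σ.real Set.univ)) := by
  have hS' : ∀ k : Option ι, MeasurableSet (k.elim R S) := by
    rintro (_ | k)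
    exacts [hR, hS k]
  have hdisj' : Pairwise (Disjoint on fun k : Option ι => k.elim R S) := by
    rintro (_ | i) (_ | j) hij
    · exact absurd rfl hij
    · exact hRS j
    · exact (hRS i).symm
    · exact hdisj fun h => hij (congrArg some h)
  have hν' : ∀ k : Option ι, k.elim σ ν (k.elim R S)ᶜ = 0 := by
    rintro (_ | k)
    exacts [hσ, hν k]
  have : ∀ k : Option ι, IsFiniteMeasure (k.elim σ ν) := by
    rintro (_ | k)
    exacts [inferInstanceAs (IsFiniteMeasure σ), inferInstanceAs (IsFiniteMeasure (ν k))]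
  have key := hellinger_sum_smul_of_disjoint_carriers (S := fun k : Option ι => k.elim R S)
    (ν := fun k => k.elim σ ν) hS' hdisj' hν'
    (a := fun k => k.elim 0 a) (b := fun k => k.elim 1 b)
    (by rintro (_ | k); exacts [le_rfl, ha k]) (by rintro (_ | k); exacts [zero_le_one, hb k])
  simpa [Fintype.sum_option, add_comm] using key

end PiecewiseMultiples

/-- Hellinger distance for mixtures with singular new components.
Let `Ps i` be probability measures carried by pairwise disjoint measurable sets `A i`, `p` a
probability vector, and `P = Σᵢ pᵢ Psᵢ`.  Let `Q'ᵢ` be probability measures each singular with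
respect to `P` (mutually singular with every `Ps j`).  If `αᵢ ∈ [0,1]`, `βᵢ ≥ 0` and
`Σᵢ (αᵢ pᵢ + βᵢ) = 1`, then for `Q = Σᵢ (αᵢ pᵢ Psᵢ + βᵢ Q'ᵢ)` the squared Hellinger distance
satisfies `H(P,Q)² = 1 − Σᵢ √(αᵢ) pᵢ`, i.e. `H(P,Q) = sqrt(1 − Σᵢ √(αᵢ) pᵢ)`. -/
theorem statement_16 {Z : Type*} [MeasurableSpace Z] {N : ℕ}
    (Ps : Fin N → Measure Z) (hPs : ∀ i, IsProbabilityMeasure (Ps i))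
    (A : Fin N → Set Z) (hA : ∀ i, MeasurableSet (A i))
    (hdisj : Pairwise fun i j => Disjoint (A i) (A j))
    (hsupp : ∀ i, Ps i (A i)ᶜ = 0)
    (p : Fin N → ℝ) (hp : ∀ i, 0 ≤ p i) (hps : ∑ i, p i = 1)
    (Q' : Fin N → Measure Z) (hQ' : ∀ i, IsProbabilityMeasure (Q' i))
    (hsing : ∀ i j, (Q' i).MutuallySingular (Ps j))
    (α β : Fin N → ℝ) (hα : ∀ i, 0 ≤ α i ∧ α i ≤ 1) (hβ : ∀ i, 0 ≤ β i)
    (hsum : ∑ i, (α i * p i + β i) = 1) :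
    let P : Measure Z := ∑ i, ENNReal.ofReal (p i) • Ps i
    let Q : Measure Z :=
      ∑ i, (ENNReal.ofReal (α i * p i) • Ps i + ENNReal.ofReal (β i) • Q' i)
    hellinger P Q ^ 2 = 1 - ∑ i, Real.sqrt (α i) * p i ∧
    hellinger P Q = Real.sqrt (1 - ∑ i, Real.sqrt (α i) * p i) := by
  intro P Q
  obtain ⟨T, hT, hQ'T, hPsT⟩ := Measure.MutuallySingular.exists_separating_of_forall hsing
  set σ := ∑ i, ENNReal.ofReal (β i) • Q' i
  have hQ : Q = ∑ i, ENNReal.ofReal (α i * p i) • Ps i + σ := Finset.sum_add_distrib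
  have hH : hellinger P Q ^ 2 = 1 - ∑ i, √(α i) * p i := by
    rw [hQ, hellinger_sum_smul_add_singular (S := fun i => A i ∩ T)
      (fun i => (hA i).inter hT)
      (fun i j hij => (hdisj hij).mono Set.inter_subset_left Set.inter_subset_left)
      (fun i => by rw [Set.compl_inter]; exact measure_union_null (hsupp i) (hPsT i))
      hT.compl (fun i => disjoint_compl_left.mono_right Set.inter_subset_right)
      (by simp [σ, hQ'T]) hp (fun i => mul_nonneg (hα i).1 (hp i)),
      Real.sq_sqrt (by positivity), measureReal_univ_sum_smul hβ]
    simp only [probReal_univ, mul_one, sq_sqrt_sub_sqrt_mul (hα _).1 (hp _)]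
    rw [Finset.sum_add_distrib] at hsum
    rw [Finset.sum_add_distrib, Finset.sum_sub_distrib, ← Finset.mul_sum]
    linarith
  have hH0 : 0 ≤ hellinger P Q := Real.sqrt_nonneg _
  exact ⟨hH, by rw [← hH, Real.sqrt_sq hH0]⟩
end
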